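/- Laplace expansion formula for the permanent: Let A be an m×m complex matrix, let k, l ∈ ℕ, and let p, q ∈ ℕ^m with |p| = |q| = k + l. Then Per(A_{p,q}) = (k! l! / (k+l)!) · Σ (p! q! / (s! t! u! v!)) · Per(A_{s,u}) · Per(A_{t,v}), where the sum ranges over all s, t, u, v ∈ ℕ^m with s + t = p, u + v = q, |s| = |u| = k, and |t| = |v| = l. -/

import Mathlib

open BigOperators Matrix

/-- The list of row indices of `A_{p,·}`: each index `i` repeated `p i` times, in order. -/
def repList {m : ℕ} (p : Fin m → ℕ) : List (Fin m) :=
  (List.finRange m).flatMap fun i => List.replicate (p i) i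

lemma repList_length {m : ℕ} (p : Fin m → ℕ) : (repList p).length = ∑ i, p i := by
  simp only [repList, List.length_flatMap, Fin.sum_univ_def]
  congr 1
  apply List.map_congr_left
  intro i _
  simp

/-- The matrix `A_{p,q}`: row `i` repeated `p i` times, column `j` repeated `q j` times. -/
def repMat {m : ℕ} (A : Matrix (Fin m) (Fin m) ℂ) (p q : Fin m → ℕ) :
    Matrix (Fin (∑ i, p i)) (Fin (∑ j, q j)) ℂ :=
  Matrix.of fun r c =>
    A ((repList p).get (Fin.cast (repList_length p).symm r))
      ((repList q).get (Fin.cast (repList_length q).symm c))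

/-- `Per(A_{p,q})`; by convention `0` when the matrix is not square. -/
noncomputable def perRep {m : ℕ} (A : Matrix (Fin m) (Fin m) ℂ) (p q : Fin m → ℕ) : ℂ :=
  if h : (∑ i, p i) = (∑ j, q j) then
    (Matrix.of fun r c : Fin (∑ i, p i) => repMat A p q r (Fin.cast h c)).permanent
  else 0

/-!
For `|s| = |u| = N`, expanding `N! · Per(A_{s,u})` as a double sum over row and column
permutations and grouping the terms by the pair of words `(g, h) : Fin N → Fin m` they produce
gives `N! · Per(A_{s,u}) = s! u! · W_N(s, u)`, where `W_N(s, u)` (`wordSum`) sums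
`∏ₐ A (g a) (h a)` over the words `g`, `h` with letter counts (`fiberCard`) `s`, `u`.
Cutting a word of length `k + l` into its first `k` and its last `l` letters splits
`W_{k+l}(p, q)` into `∑ W_k(s, u) · W_l(t, v)` over `s + t = p`, `u + v = q`;
renormalising gives the expansion.
-/

open Finset
open scoped Nat

section FiberCard

variable {α β : Type*} [Fintype α] [DecidableEq β]

def fiberCard (g : α → β) (i : β) : ℕ := #{a | g a = i}

lemma fiberCard_eq_count (g : α → β) (i : β) :
    fiberCard g i = Multiset.count i (univ.val.map g) := by
  rw [Multiset.count_map, fiberCard, card_def, filter_val]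
  simp only [eq_comm]

lemma fiberCard_comp_equiv {α' : Type*} [Fintype α'] (e : α' ≃ α) (g : α → β) :
    fiberCard (g ∘ e) = fiberCard g := by
  ext i
  simp only [fiberCard_eq_count, ← Multiset.map_map, Multiset.map_univ_val_equiv]

lemma sum_fiberCard [Fintype β] (g : α → β) : ∑ i, fiberCard g i = Fintype.card α :=
  (card_eq_sum_card_fiberwise fun a _ => mem_univ (g a)).symm

lemma card_subtype_eq_fiberCard (g : α → β) (i : β) :
    Fintype.card {a // g a = i} = fiberCard g i :=
  Fintype.card_subtype _

lemma fiberCard_get (l : List β) : fiberCard l.get = fun i => l.count i := by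
  ext i
  rw [fiberCard_eq_count, Fin.univ_val_map, List.ofFn_get, Multiset.coe_count]

lemma fiberCard_append {k l : ℕ} (g₁ : Fin k → β) (g₂ : Fin l → β) :
    fiberCard (Fin.append g₁ g₂) = fiberCard g₁ + fiberCard g₂ := by
  ext i
  simp only [fiberCard, card_filter, Fin.sum_univ_add, Fin.append_left, Fin.append_right,
    Pi.add_apply]

lemma exists_perm_comp_eq_of_fiberCard_eq {r g : α → β} (h : fiberCard g = fiberCard r) :
    ∃ π : Equiv.Perm α, r ∘ π = g :=
  ⟨Equiv.ofFiberEquiv fun i => Fintype.equivOfCardEq <| by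
      rw [card_subtype_eq_fiberCard, card_subtype_eq_fiberCard, h],
    funext (Equiv.ofFiberEquiv_map _)⟩

variable [DecidableEq α]

lemma card_perm_comp_eq [Fintype β] {r g : α → β} (h : fiberCard g = fiberCard r) :
    #{π : Equiv.Perm α | r ∘ π = g} = ∏ i, (fiberCard r i)! := by
  obtain ⟨π₀, rfl⟩ := exists_perm_comp_eq_of_fiberCard_eq h
  have hstab : {π : Equiv.Perm α // r ∘ π = r ∘ π₀} ≃ {σ : Equiv.Perm α // r ∘ σ = r} :=
    Equiv.subtypeEquiv (Equiv.mulRight π₀⁻¹) fun π => by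
      rw [Equiv.coe_mulRight, Equiv.Perm.coe_mul, Equiv.Perm.coe_inv, ← Function.comp_assoc,
        Equiv.comp_symm_eq]
  simp_rw [← Fintype.card_subtype, Fintype.card_congr hstab, DomMulAct.stabilizer_card,
    card_subtype_eq_fiberCard]

lemma sum_perm_comp {M : Type*} [AddCommMonoid M] [Fintype β] (r : α → β) (F : (α → β) → M) :
    ∑ π : Equiv.Perm α, F (r ∘ π) =
      (∏ i, (fiberCard r i)!) • ∑ g : α → β with fiberCard g = fiberCard r, F g := by
  rw [← sum_fiberwise_of_maps_to' (t := {g | fiberCard g = fiberCard r})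
    (fun π _ => mem_filter.2 ⟨mem_univ _, fiberCard_comp_equiv π r⟩), smul_sum]
  refine sum_congr rfl fun g hg => ?_
  rw [sum_const, card_perm_comp_eq (mem_filter.1 hg).2]

end FiberCard

namespace Matrix

variable {n R : Type*} [Fintype n] [DecidableEq n] [CommSemiring R]

lemma sum_perm_prod_eq_permanent (M : Matrix n n R) (π : Equiv.Perm n) :
    ∑ ρ : Equiv.Perm n, ∏ i, M (π i) (ρ i) = M.permanent := by
  rw [← M.permanent_permute_cols π, ← permanent_transpose]
  rfl

lemma permanent_submatrix_equiv {n' : Type*} [Fintype n'] [DecidableEq n'] (e : n' ≃ n)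
    (M : Matrix n n R) : (M.submatrix e e).permanent = M.permanent :=
  Fintype.sum_equiv e.permCongr _ _ fun σ =>
    Fintype.prod_equiv e _ _ fun i => by simp [Equiv.permCongr_apply]

lemma factorial_card_mul_permanent_submatrix {β γ : Type*} [Fintype β] [DecidableEq β]
    [Fintype γ] [DecidableEq γ] (A : Matrix β γ R) (r : n → β) (c : n → γ) :
    (Fintype.card n)! * (A.submatrix r c).permanent =
      (∏ i, (fiberCard r i)! : ℕ) * (∏ j, (fiberCard c j)! : ℕ) *
        ∑ g : n → β with fiberCard g = fiberCard r,
          ∑ h : n → γ with fiberCard h = fiberCard c, ∏ a, A (g a) (h a) := by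
  calc (Fintype.card n)! * (A.submatrix r c).permanent
      = ∑ π : Equiv.Perm n, ∑ ρ : Equiv.Perm n, ∏ a, A (r (π a)) (c (ρ a)) := by
        simp only [← submatrix_apply (A := A), sum_perm_prod_eq_permanent, sum_const, card_univ,
          Fintype.card_perm, nsmul_eq_mul]
    _ = ∑ π : Equiv.Perm n, (∏ j, (fiberCard c j)!) •
          ∑ h : n → γ with fiberCard h = fiberCard c, ∏ a, A (r (π a)) (h a) :=
        sum_congr rfl fun π _ => sum_perm_comp c fun h => ∏ a, A (r (π a)) (h a)
    _ = (∏ j, (fiberCard c j)!) • (∏ i, (fiberCard r i)!) •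
          ∑ g : n → β with fiberCard g = fiberCard r,
            ∑ h : n → γ with fiberCard h = fiberCard c, ∏ a, A (g a) (h a) := by
        rw [← smul_sum, ← sum_perm_comp r fun g =>
          ∑ h : n → γ with fiberCard h = fiberCard c, ∏ a, A (g a) (h a)]
        rfl
    _ = _ := by
        rw [nsmul_eq_mul, nsmul_eq_mul]
        ring

end Matrix

section WordSum

variable {β γ R : Type*} [Fintype β] [DecidableEq β] [Fintype γ] [DecidableEq γ] [CommSemiring R]

lemma sum_fiberCard_eq_sum_antidiagonal {M : Type*} [AddCommMonoid M] {k l : ℕ} (p : β → ℕ)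
    (F : (Fin (k + l) → β) → M) :
    ∑ g : Fin (k + l) → β with fiberCard g = p, F g =
      ∑ st ∈ (antidiagonal (Finsupp.equivFunOnFinite.symm p)).filter
          (fun st => ∑ i, st.1 i = k ∧ ∑ i, st.2 i = l),
        ∑ g₁ : Fin k → β with fiberCard g₁ = st.1,
          ∑ g₂ : Fin l → β with fiberCard g₂ = st.2, F (Fin.append g₁ g₂) := by
  let counts : (Fin k → β) × (Fin l → β) → (β →₀ ℕ) × (β →₀ ℕ) := fun x =>
    (Finsupp.equivFunOnFinite.symm (fiberCard x.1), Finsupp.equivFunOnFinite.symm (fiberCard x.2))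
  calc ∑ g : Fin (k + l) → β with fiberCard g = p, F g
      = ∑ x : (Fin k → β) × (Fin l → β) with fiberCard x.1 + fiberCard x.2 = p,
          F (Fin.append x.1 x.2) :=
        (sum_equiv (Fin.appendEquiv k l) (by simp [Fin.appendEquiv, fiberCard_append])
          (by simp [Fin.appendEquiv])).symm
    _ = _ := by
      have hcounts : ∀ x ∈ ({x | fiberCard x.1 + fiberCard x.2 = p} :
          Finset ((Fin k → β) × (Fin l → β))), counts x ∈
            (antidiagonal (Finsupp.equivFunOnFinite.symm p)).filter
              (fun st => ∑ i, st.1 i = k ∧ ∑ i, st.2 i = l) := by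
        intro x hx
        simp only [mem_filter, mem_univ, true_and] at hx
        simp only [counts, mem_filter, HasAntidiagonal.mem_antidiagonal, ← hx,
          Finsupp.coe_equivFunOnFinite_symm, sum_fiberCard, Fintype.card_fin, and_true]
        ext i
        simp
      rw [← sum_fiberwise_of_maps_to hcounts]
      refine sum_congr rfl fun st hst => ?_
      have hsum : st.1 + st.2 = Finsupp.equivFunOnFinite.symm p :=
        HasAntidiagonal.mem_antidiagonal.1 (mem_filter.1 hst).1
      rw [← sum_product']
      refine sum_congr (ext fun x => ?_) fun _ _ => rfl
      simp only [counts, mem_filter, mem_univ, true_and, mem_product, Prod.ext_iff,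
        Equiv.symm_apply_eq]
      refine ⟨And.right, fun h => ⟨?_, h⟩⟩
      rw [h.1, h.2, ← Finsupp.coe_add, hsum, Finsupp.coe_equivFunOnFinite_symm]

def wordSum (A : Matrix β γ R) (N : ℕ) (s : β → ℕ) (u : γ → ℕ) : R :=
  ∑ g : Fin N → β with fiberCard g = s, ∑ h : Fin N → γ with fiberCard h = u, ∏ a, A (g a) (h a)

lemma wordSum_add (A : Matrix β γ R) (k l : ℕ) (p : β → ℕ) (q : γ → ℕ) :
    wordSum A (k + l) p q =
      ∑ st ∈ (antidiagonal (Finsupp.equivFunOnFinite.symm p)).filter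
          (fun st => ∑ i, st.1 i = k ∧ ∑ i, st.2 i = l),
        ∑ uv ∈ (antidiagonal (Finsupp.equivFunOnFinite.symm q)).filter
            (fun uv => ∑ j, uv.1 j = k ∧ ∑ j, uv.2 j = l),
          wordSum A k st.1 uv.1 * wordSum A l st.2 uv.2 := by
  simp only [wordSum, sum_fiberCard_eq_sum_antidiagonal p, sum_fiberCard_eq_sum_antidiagonal q,
    Fin.prod_univ_add, Fin.append_left, Fin.append_right, sum_mul_sum]
  refine sum_congr rfl fun st _ => ?_
  conv_lhs => enter [2, g₁]; rw [sum_comm]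
  exact sum_comm

end WordSum

section PerRep

variable {m : ℕ}

lemma count_repList (p : Fin m → ℕ) (i : Fin m) : (repList p).count i = p i := by
  simp only [repList, List.count_flatMap, ← Fin.sum_univ_def, Function.comp_apply,
    List.count_replicate]
  simp

lemma fiberCard_repList_get (p : Fin m → ℕ) : fiberCard (repList p).get = p := by
  rw [fiberCard_get]
  exact funext (count_repList p)

lemma perRep_eq_permanent_submatrix (A : Matrix (Fin m) (Fin m) ℂ) {N : ℕ} {s u : Fin m → ℕ}
    (hs : ∑ i, s i = N) (hu : ∑ j, u j = N) :
    perRep A s u = (A.submatrix ((repList s).get ∘ finCongr ((repList_length s).trans hs).symm)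
      ((repList u).get ∘ finCongr ((repList_length u).trans hu).symm)).permanent := by
  rw [perRep, dif_pos (hs.trans hu.symm), ← Matrix.permanent_submatrix_equiv (finCongr hs.symm)]
  rfl

lemma perRep_eq_wordSum (A : Matrix (Fin m) (Fin m) ℂ) {N : ℕ} {s u : Fin m → ℕ}
    (hs : ∑ i, s i = N) (hu : ∑ j, u j = N) :
    perRep A s u = ((∏ i, (s i)! : ℕ) * (∏ j, (u j)! : ℕ) / (N ! : ℕ) : ℂ) * wordSum A N s u := by
  have h := A.factorial_card_mul_permanent_submatrix
    ((repList s).get ∘ finCongr ((repList_length s).trans hs).symm)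
    ((repList u).get ∘ finCongr ((repList_length u).trans hu).symm)
  simp only [fiberCard_comp_equiv, fiberCard_repList_get, Fintype.card_fin] at h
  rw [perRep_eq_permanent_submatrix A hs hu, div_mul_eq_mul_div,
    eq_div_iff (Nat.cast_ne_zero.2 N.factorial_ne_zero), mul_comm, h, wordSum]

end PerRep

/-- **Laplace expansion formula for the permanent.** -/
theorem permanent_laplace_expansion (m : ℕ) (A : Matrix (Fin m) (Fin m) ℂ) (k l : ℕ)
    (p q : Fin m → ℕ) (hp : ∑ i, p i = k + l) (hq : ∑ j, q j = k + l) :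
    perRep A p q =
      ((Nat.factorial k * Nat.factorial l : ℕ) : ℂ) / ((Nat.factorial (k + l) : ℕ) : ℂ) *
        ∑ st ∈ (Finset.HasAntidiagonal.antidiagonal (Finsupp.equivFunOnFinite.symm p)).filter
            (fun st => (∑ i, st.1 i) = k ∧ (∑ i, st.2 i) = l),
          ∑ uv ∈ (Finset.HasAntidiagonal.antidiagonal (Finsupp.equivFunOnFinite.symm q)).filter
              (fun uv => (∑ j, uv.1 j) = k ∧ (∑ j, uv.2 j) = l),
            (((∏ i, Nat.factorial (p i)) * ∏ j, Nat.factorial (q j) : ℕ) : ℂ) /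
                (((∏ i, Nat.factorial (st.1 i)) * (∏ i, Nat.factorial (st.2 i)) *
                  (∏ j, Nat.factorial (uv.1 j)) * ∏ j, Nat.factorial (uv.2 j) : ℕ) : ℂ) *
              perRep A (⇑st.1) (⇑uv.1) * perRep A (⇑st.2) (⇑uv.2) := by
  have hfac (n : ℕ) : (n ! : ℂ) ≠ 0 := Nat.cast_ne_zero.2 n.factorial_ne_zero
  have hprod (s : Fin m → ℕ) : ∏ i, ((s i)! : ℂ) ≠ 0 := prod_ne_zero_iff.2 fun i _ => hfac (s i)
  rw [perRep_eq_wordSum A hp hq, wordSum_add]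
  simp only [mul_sum]
  refine sum_congr rfl fun st hst => sum_congr rfl fun uv huv => ?_
  obtain ⟨hs, ht⟩ := (mem_filter.1 hst).2
  obtain ⟨hu, hv⟩ := (mem_filter.1 huv).2
  rw [perRep_eq_wordSum A hs hu, perRep_eq_wordSum A ht hv]
  have := hfac k; have := hfac l
  have := hprod st.1; have := hprod st.2; have := hprod uv.1; have := hprod uv.2
  push_cast
  field_simp
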